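/- For real x > 0 and y > 0, the Cauchy principal value of R_C(x, −y) satisfies p.v. R_C(x,−y) = (x/(x+y))^{1/2} R_C(x+y, y), where the left side is the principal value of (1/2)∫₀^∞ (t+x)^{-1/2} (t−y)^{-1} dt. -/

import Mathlib

open MeasureTheory Real

noncomputable def RC (x y : ℝ) : ℝ :=
  (1/2) * ∫ t in Set.Ioi (0:ℝ), (Real.sqrt (t + x))⁻¹ * (t + y)⁻¹

noncomputable def RF (x y z : ℝ) : ℝ :=
  (1/2) * ∫ t in Set.Ioi (0:ℝ), (Real.sqrt ((t + x) * (t + y) * (t + z)))⁻¹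

noncomputable def RD (x y z : ℝ) : ℝ :=
  (3/2) * ∫ t in Set.Ioi (0:ℝ),
    (Real.sqrt ((t + x) * (t + y)))⁻¹ * ((t + z) * Real.sqrt (t + z))⁻¹

noncomputable def RJ (x y z p : ℝ) : ℝ :=
  (3/2) * ∫ t in Set.Ioi (0:ℝ),
    (Real.sqrt ((t + x) * (t + y) * (t + z)))⁻¹ * (t + p)⁻¹

noncomputable def RG (x y z : ℝ) : ℝ :=
  (1/4) * ∫ t in Set.Ioi (0:ℝ),
    (Real.sqrt ((t + x) * (t + y) * (t + z)))⁻¹ *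
      (x / (t + x) + y / (t + y) + z / (t + z)) * t

/-
For `b < a`, `G(t) = (a - b)^{-1/2} (log |t + b| - 2 log (√(t + a) + √(a - b)))` is an elementary
primitive of `(t + a)^{-1/2} (t + b)^{-1}` on each side of the pole `t = -b`, and `G → 0` at `∞`.
Hence `R_C(x + y, y) = -G_{x+y,y}(0) / 2`, while the truncated principal-value integral equals
`G(y - ε) - G(y + ε) - G(0)` for `G = G_{x,-y}`, whose symmetric difference tends to `0`
because the `log |t - y|` singularities cancel. The two values `G(0)` carry the same logarithms
and differ only in the prefactors `(x + y)^{-1/2}` and `x^{-1/2}`.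
-/

open Filter Topology Set

/-- `log` is `Real.log`, so `log (t + b)` is `log |t + b|`: this makes `rcPrimitive a b` a
primitive of the integrand on both sides of its pole `t = -b`. -/
noncomputable def rcPrimitive (a b t : ℝ) : ℝ :=
  (√(a - b))⁻¹ * (log (t + b) - 2 * log (√(t + a) + √(a - b)))

section
variable {a b : ℝ}

lemma hasDerivAt_rcPrimitive (hba : b < a) {t : ℝ} (ha : 0 < t + a) (hb : t + b ≠ 0) :
    HasDerivAt (rcPrimitive a b) ((√(t + a))⁻¹ * (t + b)⁻¹) t := by
  set c := √(a - b)
  set u := √(t + a)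
  have hc : 0 < c := Real.sqrt_pos.2 (sub_pos.2 hba)
  have hu : 0 < u := Real.sqrt_pos.2 ha
  have hsqrt := ((hasDerivAt_id' t).add_const a).sqrt ha.ne'
  have hlog₁ := ((hasDerivAt_id' t).add_const b).log hb
  have hlog₂ := (hsqrt.add_const c).log (by positivity)
  refine ((hlog₁.sub (hlog₂.const_mul 2)).const_mul c⁻¹).congr_deriv ?_
  have hdiff : t + b = (u - c) * (u + c) := by
    rw [mul_comm, ← sq_sub_sq, Real.sq_sqrt ha.le, Real.sq_sqrt (sub_pos.2 hba).le]; ring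
  have huc : u - c ≠ 0 := by rintro h; exact hb (by rw [hdiff, h, zero_mul])
  rw [hdiff]
  field_simp
  ring

lemma rcPrimitive_eq_log_one_sub (hba : b < a) {t : ℝ} (hb : 0 < t + b) :
    rcPrimitive a b t = (√(a - b))⁻¹ * log (1 - 2 * √(a - b) / (√(t + a) + √(a - b))) := by
  set c := √(a - b)
  set u := √(t + a)
  have hc : 0 < c := Real.sqrt_pos.2 (sub_pos.2 hba)
  have hu : 0 < u := Real.sqrt_pos.2 (by linarith)
  have hdiff : t + b = (u - c) * (u + c) := by
    rw [mul_comm, ← sq_sub_sq, Real.sq_sqrt (by linarith : 0 ≤ t + a),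
      Real.sq_sqrt (sub_pos.2 hba).le]; ring
  have hone_sub : 1 - 2 * c / (u + c) = (t + b) / (u + c) ^ 2 := by
    rw [hdiff]; field_simp; ring
  rw [rcPrimitive, hone_sub, Real.log_div hb.ne' (by positivity), Real.log_pow]
  push_cast; ring

lemma tendsto_rcPrimitive_atTop (hba : b < a) : Tendsto (rcPrimitive a b) atTop (𝓝 0) := by
  set c := √(a - b)
  have hden : Tendsto (fun t => √(t + a) + c) atTop atTop :=
    tendsto_atTop_add_const_right _ c
      (Real.tendsto_sqrt_atTop.comp (tendsto_atTop_add_const_right _ a tendsto_id))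
  have hlog : Tendsto (fun t => c⁻¹ * log (1 - 2 * c / (√(t + a) + c))) atTop
      (𝓝 (c⁻¹ * log (1 - 0))) :=
    (((tendsto_const_nhds.div_atTop hden).const_sub 1).log (by norm_num)).const_mul _
  rw [sub_zero, Real.log_one, mul_zero] at hlog
  refine hlog.congr' ?_
  filter_upwards [eventually_gt_atTop (-b)] with t ht
  exact (rcPrimitive_eq_log_one_sub hba (by linarith)).symm

lemma integral_Ioi_rcIntegrand (hba : b < a) {s : ℝ} (hs : -b < s) :
    IntegrableOn (fun t => (√(t + a))⁻¹ * (t + b)⁻¹) (Ioi s) ∧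
      ∫ t in Ioi s, (√(t + a))⁻¹ * (t + b)⁻¹ = -rcPrimitive a b s := by
  have hderiv : ∀ t ∈ Ici s, HasDerivAt (rcPrimitive a b) ((√(t + a))⁻¹ * (t + b)⁻¹) t :=
    fun t ht => hasDerivAt_rcPrimitive hba (by linarith [mem_Ici.1 ht]) (by linarith [mem_Ici.1 ht])
  have hnonneg : ∀ t ∈ Ioi s, 0 ≤ (√(t + a))⁻¹ * (t + b)⁻¹ := fun t ht =>
    mul_nonneg (by positivity) (inv_nonneg.2 (by linarith [mem_Ioi.1 ht]))
  have hlim := tendsto_rcPrimitive_atTop hba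
  exact ⟨integrableOn_Ioi_deriv_of_nonneg' hderiv hnonneg hlim,
    (integral_Ioi_of_hasDerivAt_of_nonneg' hderiv hnonneg hlim).trans (zero_sub _)⟩

lemma integral_Ioo_rcIntegrand {r s : ℝ} (hr : -a < r) (hrs : r ≤ s) (hs : s < -b) :
    IntegrableOn (fun t => (√(t + a))⁻¹ * (t + b)⁻¹) (Ioo r s) ∧
      ∫ t in Ioo r s, (√(t + a))⁻¹ * (t + b)⁻¹ = rcPrimitive a b s - rcPrimitive a b r := by
  have hcont : ContinuousOn (fun t => (√(t + a))⁻¹ * (t + b)⁻¹) (Icc r s) := by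
    intro t ht
    have ha : √(t + a) ≠ 0 := (Real.sqrt_pos.2 (by linarith [ht.1])).ne'
    have hb : t + b ≠ 0 := by linarith [ht.2]
    exact ContinuousAt.continuousWithinAt (by fun_prop (disch := assumption))
  refine ⟨hcont.integrableOn_Icc.mono_set Ioo_subset_Icc_self, ?_⟩
  rw [← integral_Ioc_eq_integral_Ioo, ← intervalIntegral.integral_of_le hrs]
  refine intervalIntegral.integral_eq_sub_of_hasDerivAt (fun t ht => ?_)
    (hcont.intervalIntegrable_of_Icc hrs)
  rw [uIcc_of_le hrs] at ht
  exact hasDerivAt_rcPrimitive (by linarith) (by linarith [ht.1]) (by linarith [ht.2])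

lemma tendsto_rcPrimitive_sub_rcPrimitive (hba : b < a) :
    Tendsto (fun ε => rcPrimitive a b (-b - ε) - rcPrimitive a b (-b + ε)) (𝓝 0) (𝓝 0) := by
  set c := √(a - b)
  have hcont : ContinuousAt
      (fun ε => c⁻¹ * (2 * log (√(a - b + ε) + c) - 2 * log (√(a - b - ε) + c))) 0 := by
    fun_prop (disch := positivity)
  have := hcont.tendsto
  simp only [add_zero, sub_zero, sub_self, mul_zero] at this
  -- the `log |t + b|` terms cancel at points symmetric about the pole
  refine this.congr fun ε => ?_
  have e₁ : -b - ε + b = -ε := by ring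
  have e₂ : -b - ε + a = a - b - ε := by ring
  have e₃ : -b + ε + b = ε := by ring
  have e₄ : -b + ε + a = a - b + ε := by ring
  simp only [rcPrimitive, e₁, e₂, e₃, e₄, Real.log_neg_eq_log, c]
  ring

lemma integral_pv_rcIntegrand {r ε : ℝ} (hr : -a < r) (hrε : r ≤ -b - ε) (hε : 0 < ε) :
    ∫ t in Ioo r (-b - ε) ∪ Ioi (-b + ε), (√(t + a))⁻¹ * (t + b)⁻¹ =
      rcPrimitive a b (-b - ε) - rcPrimitive a b (-b + ε) - rcPrimitive a b r := by
  obtain ⟨hint₁, hval₁⟩ := integral_Ioo_rcIntegrand (b := b) hr hrε (by linarith)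
  obtain ⟨hint₂, hval₂⟩ := integral_Ioi_rcIntegrand (a := a) (by linarith) (by linarith : -b < -b + ε)
  have hdisj : Disjoint (Ioo r (-b - ε)) (Ioi (-b + ε)) :=
    Set.disjoint_left.2 fun t h₁ h₂ => by linarith [h₁.2, mem_Ioi.1 h₂]
  rw [setIntegral_union hdisj measurableSet_Ioi hint₁ hint₂, hval₁, hval₂]
  ring

end

lemma rcPrimitive_zero_neg {x : ℝ} (hx : 0 < x) (y : ℝ) :
    rcPrimitive x (-y) 0 = √(x / (x + y)) * rcPrimitive (x + y) y 0 := by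
  have hsx : √x ≠ 0 := (Real.sqrt_pos.2 hx).ne'
  rw [Real.sqrt_div hx.le]
  simp only [rcPrimitive, zero_add, sub_neg_eq_add, add_sub_cancel_right, Real.log_neg_eq_log]
  rw [add_comm √(x + y)]
  field_simp

theorem stmt7 (x y : ℝ) (hx : 0 < x) (hy : 0 < y) (L : ℝ)
    (hL : Filter.Tendsto
      (fun ε : ℝ => (1/2) * ∫ t in Set.Ioo (0:ℝ) (y - ε) ∪ Set.Ioi (y + ε),
        (Real.sqrt (t + x))⁻¹ * (t - y)⁻¹)
      (nhdsWithin 0 (Set.Ioi 0)) (nhds L)) :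
    L = Real.sqrt (x / (x + y)) * RC (x + y) y := by
  have hpv : ∀ᶠ ε in 𝓝[>] 0, (1/2) * ∫ t in Ioo 0 (y - ε) ∪ Ioi (y + ε),
      (√(t + x))⁻¹ * (t - y)⁻¹ = (1/2) * (rcPrimitive x (-y) (y - ε) - rcPrimitive x (-y) (y + ε) -
      rcPrimitive x (-y) 0) := by
    filter_upwards [Ioo_mem_nhdsGT hy] with ε ⟨hε, hεy⟩
    have := integral_pv_rcIntegrand (a := x) (b := -y) (r := 0) (by linarith) (by linarith) hε
    simp only [neg_neg, ← sub_eq_add_neg] at this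
    rw [this]
  have hlim : Tendsto (fun ε => (1/2) * (rcPrimitive x (-y) (y - ε) - rcPrimitive x (-y) (y + ε) -
      rcPrimitive x (-y) 0)) (𝓝[>] 0)
      (𝓝 ((1/2) * (0 - rcPrimitive x (-y) 0))) := by
    have := tendsto_rcPrimitive_sub_rcPrimitive (a := x) (b := -y) (by linarith)
    simp only [neg_neg] at this
    exact ((this.mono_left nhdsWithin_le_nhds).sub_const _).const_mul _
  rw [tendsto_nhds_unique (hL.congr' hpv) hlim, RC,
    (integral_Ioi_rcIntegrand (by linarith) (by linarith : -y < 0)).2, rcPrimitive_zero_neg hx]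
  ring
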